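/- Let I₀(x) = ∑_{k=0}^∞ (x/2)^{2k} / (k!)². Fix β ∈ ℝ, μ > 0, R > 0, and nonnegative reals ℓ₂, ℓ₃, ℓ₄, not all zero, and set ℓ₁ = √((3/4)ℓ₂² + (1/2)ℓ₃² + 2ℓ₄²) (so ℓ₁ > 0). Assume the denominator Den = ℓ₁² R I₀''(R/ℓ₁) − ℓ₁ ((1/4)ℓ₂² + (1/2)ℓ₃² − 2ℓ₄²) I₀'(R/ℓ₁) is nonzero, and define v : (0, R] → ℝ by v(r) = (β/(4μ))(R² − r²) + ( R β (ℓ₁² − (1/4)ℓ₂² − (1/2)ℓ₃² + 2ℓ₄²) ℓ₁² (I₀(r/ℓ₁) − I₀(R/ℓ₁)) ) / (2μ · Den). Then v satisfies 𝓛(1 − ℓ₁²𝓛)v = −β/μ on (0, R) with 𝓛f = f'' + (1/r)f', the no-slip condition v(R) = 0, and the weak adherence condition μℓ₁² v''(R) − μ((1/4)ℓ₂² + (1/2)ℓ₃² − 2ℓ₄²)·(1/R)·v'(R) = 0. -/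

import Mathlib

/-- Modified Bessel function of the first kind of order 0. -/
noncomputable def besselI0 (x : ℝ) : ℝ :=
  ∑' k : ℕ, (x / 2) ^ (2 * k) / (k.factorial : ℝ) ^ 2

/-- The cylindrical operator `𝓛 f = f'' + (1/r) f'`. -/
noncomputable def cylOpL (f : ℝ → ℝ) (r : ℝ) : ℝ :=
  deriv (deriv f) r + (1 / r) * deriv f r

namespace BesselAux

noncomputable def t0 (k : ℕ) (x : ℝ) : ℝ := (x / 2) ^ (2 * k) / (k.factorial : ℝ) ^ 2
noncomputable def t1 (k : ℕ) (x : ℝ) : ℝ :=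
  ((2 * k : ℕ) : ℝ) * (x / 2) ^ (2 * k - 1) / (2 * (k.factorial : ℝ) ^ 2)
noncomputable def t2 (k : ℕ) (x : ℝ) : ℝ :=
  ((2 * k : ℕ) : ℝ) * ((2 * k - 1 : ℕ) : ℝ) * (x / 2) ^ (2 * k - 2) / (4 * (k.factorial : ℝ) ^ 2)

noncomputable def bI1 (x : ℝ) : ℝ := ∑' k, t1 k x
noncomputable def bI2 (x : ℝ) : ℝ := ∑' k, t2 k x

lemma besselI0_eq (x : ℝ) : besselI0 x = ∑' k, t0 k x := rfl

lemma fact_one_le (k : ℕ) : (1 : ℝ) ≤ (k.factorial : ℝ) := by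
  exact_mod_cast k.factorial_pos

lemma fact_pos (k : ℕ) : (0 : ℝ) < (k.factorial : ℝ) := by positivity

lemma self_le_fact (k : ℕ) : (k : ℝ) ≤ (k.factorial : ℝ) := by
  exact_mod_cast Nat.self_le_factorial k

lemma sq_le_four_pow (k : ℕ) : ((k : ℝ)) ^ 2 ≤ 4 ^ k := by
  have h : (k : ℝ) ≤ 2 ^ k := by exact_mod_cast (Nat.lt_two_pow_self (n := k)).le
  calc ((k : ℝ)) ^ 2 ≤ ((2 : ℝ) ^ k) ^ 2 := pow_le_pow_left₀ (by positivity) h 2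
    _ = 4 ^ k := by rw [← pow_mul, mul_comm, pow_mul]; norm_num

lemma norm_t0_le {M x : ℝ} (hM : 2 ≤ M) (hx : |x| ≤ M) (k : ℕ) :
    ‖t0 k x‖ ≤ (M ^ 2) ^ k / k.factorial := by
  have hy : |x / 2| ≤ M / 2 := by rw [abs_div, abs_two]; linarith
  have hnum : |x / 2| ^ (2 * k) ≤ (M ^ 2) ^ k := by
    rw [pow_mul]
    refine pow_le_pow_left₀ (by positivity) ?_ k
    calc |x / 2| ^ 2 ≤ (M / 2) ^ 2 := pow_le_pow_left₀ (abs_nonneg _) hy 2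
      _ ≤ M ^ 2 := by nlinarith
  have hkey : ‖t0 k x‖ = |x / 2| ^ (2 * k) / (k.factorial : ℝ) ^ 2 := by
    rw [t0, Real.norm_eq_abs, abs_div, abs_pow,
      abs_of_pos (by positivity : (0:ℝ) < (k.factorial:ℝ)^2)]
  rw [hkey]
  exact div_le_div₀ (by positivity) hnum (fact_pos k)
    (le_self_pow₀ (fact_one_le k) two_ne_zero)

lemma norm_t1_le {M x : ℝ} (hM : 2 ≤ M) (hx : |x| ≤ M) (k : ℕ) :
    ‖t1 k x‖ ≤ (M ^ 2) ^ k / k.factorial := by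
  have hy : |x / 2| ≤ M / 2 := by rw [abs_div, abs_two]; linarith
  have hN1 : (1 : ℝ) ≤ M / 2 := by linarith
  have hyn : |x / 2| ^ (2 * k - 1) ≤ (M / 2) ^ (2 * k) :=
    (pow_le_pow_left₀ (abs_nonneg _) hy _).trans
      (pow_le_pow_right₀ hN1 (Nat.sub_le _ _))
  have hkey : ‖t1 k x‖ = ((2 * k : ℕ) : ℝ) * |x / 2| ^ (2 * k - 1)
      / (2 * (k.factorial : ℝ) ^ 2) := by
    rw [t1, Real.norm_eq_abs, abs_div, abs_mul, abs_pow, Nat.abs_cast,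
      abs_of_pos (by positivity : (0:ℝ) < 2 * (k.factorial:ℝ)^2)]
  rw [hkey]
  have hMk : ((M / 2) : ℝ) ^ (2 * k) = (M ^ 2) ^ k / 4 ^ k := by
    have hsq : ((M / 2) : ℝ) ^ 2 = M ^ 2 / 4 := by ring
    rw [pow_mul, hsq, div_pow]
  have hnum : ((2 * k : ℕ) : ℝ) * |x / 2| ^ (2 * k - 1) ≤ 2 * ((M ^ 2) ^ k) := by
    have h1 : ((2 * k : ℕ) : ℝ) * |x / 2| ^ (2 * k - 1)
        ≤ (2 * (k : ℝ)) * (M / 2) ^ (2 * k) := by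
      push_cast
      exact mul_le_mul le_rfl hyn (by positivity) (by positivity)
    refine h1.trans ?_
    rw [hMk]
    have h2 : (k : ℝ) ≤ 4 ^ k := by
      have ha : (k : ℝ) ≤ 2 ^ k := by exact_mod_cast (Nat.lt_two_pow_self (n := k)).le
      exact ha.trans (pow_le_pow_left₀ (by norm_num) (by norm_num) k)
    rw [← mul_div_assoc, div_le_iff₀ (by positivity)]
    have hmn : (0:ℝ) ≤ (M ^ 2) ^ k := by positivity
    nlinarith
  rw [div_le_div_iff₀ (by positivity) (fact_pos k)]
  have hf2 : (k.factorial : ℝ) ≤ (k.factorial : ℝ) ^ 2 :=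
    le_self_pow₀ (fact_one_le k) two_ne_zero
  nlinarith [fact_pos k, pow_pos (fact_pos k) 2, hnum,
    mul_le_mul_of_nonneg_right hnum (fact_pos k).le,
    pow_nonneg (abs_nonneg (x/2)) (2*k-1),
    mul_nonneg (mul_nonneg (by positivity : (0:ℝ) ≤ ((2*k:ℕ):ℝ)) (pow_nonneg (abs_nonneg (x/2)) (2*k-1))) (fact_pos k).le,
    mul_le_mul_of_nonneg_left hf2 (by positivity : (0:ℝ) ≤ 2 * (M^2)^k)]

lemma norm_t2_le {M x : ℝ} (hM : 2 ≤ M) (hx : |x| ≤ M) (k : ℕ) :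
    ‖t2 k x‖ ≤ (M ^ 2) ^ k / k.factorial := by
  have hy : |x / 2| ≤ M / 2 := by rw [abs_div, abs_two]; linarith
  have hN1 : (1 : ℝ) ≤ M / 2 := by linarith
  have hyn : |x / 2| ^ (2 * k - 2) ≤ (M / 2) ^ (2 * k) :=
    (pow_le_pow_left₀ (abs_nonneg _) hy _).trans
      (pow_le_pow_right₀ hN1 (Nat.sub_le _ _))
  have hkey : ‖t2 k x‖ = ((2 * k : ℕ) : ℝ) * ((2 * k - 1 : ℕ) : ℝ) * |x / 2| ^ (2 * k - 2)
      / (4 * (k.factorial : ℝ) ^ 2) := by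
    rw [t2, Real.norm_eq_abs, abs_div, abs_mul, abs_mul, abs_pow, Nat.abs_cast, Nat.abs_cast,
      abs_of_pos (by positivity : (0:ℝ) < 4 * (k.factorial:ℝ)^2)]
  rw [hkey]
  have hc : ((2 * k : ℕ) : ℝ) * ((2 * k - 1 : ℕ) : ℝ) ≤ 4 * (k : ℝ) ^ 2 := by
    have h1 : ((2 * k - 1 : ℕ) : ℝ) ≤ 2 * (k : ℝ) := by
      have h := Nat.sub_le (2 * k) 1
      calc ((2 * k - 1 : ℕ) : ℝ) ≤ ((2 * k : ℕ) : ℝ) := by exact_mod_cast h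
        _ = 2 * (k : ℝ) := by push_cast; ring
    have h0 : (0:ℝ) ≤ ((2 * k - 1 : ℕ) : ℝ) := Nat.cast_nonneg _
    push_cast
    nlinarith [Nat.cast_nonneg (α := ℝ) k]
  have hMk : ((M / 2) : ℝ) ^ (2 * k) = (M ^ 2) ^ k / 4 ^ k := by
    have hsq : ((M / 2) : ℝ) ^ 2 = M ^ 2 / 4 := by ring
    rw [pow_mul, hsq, div_pow]
  have hnum : ((2 * k : ℕ) : ℝ) * ((2 * k - 1 : ℕ) : ℝ) * |x / 2| ^ (2 * k - 2)
      ≤ 4 * (M ^ 2) ^ k := by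
    have h1 : ((2 * k : ℕ) : ℝ) * ((2 * k - 1 : ℕ) : ℝ) * |x / 2| ^ (2 * k - 2)
        ≤ (4 * (k : ℝ) ^ 2) * (M / 2) ^ (2 * k) :=
      mul_le_mul hc hyn (by positivity) (by positivity)
    refine h1.trans ?_
    rw [hMk]
    have h2 := sq_le_four_pow k
    rw [← mul_div_assoc, div_le_iff₀ (by positivity)]
    have hmn : (0:ℝ) ≤ (M ^ 2) ^ k := by positivity
    nlinarith
  rw [div_le_div_iff₀ (by positivity) (fact_pos k)]
  have hf2 : (k.factorial : ℝ) ≤ (k.factorial : ℝ) ^ 2 :=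
    le_self_pow₀ (fact_one_le k) two_ne_zero
  nlinarith [fact_pos k, mul_le_mul_of_nonneg_right hnum (fact_pos k).le,
    mul_le_mul_of_nonneg_left hf2 (by positivity : (0:ℝ) ≤ 4 * (M^2)^k)]

end BesselAux

namespace BesselAux2
open BesselAux

lemma summable_u (M : ℝ) : Summable (fun k : ℕ => (M ^ 2) ^ k / k.factorial) :=
  Real.summable_pow_div_factorial (M ^ 2)

lemma M_spec (x : ℝ) : 2 ≤ |x| + 2 ∧ |x| ≤ |x| + 2 := ⟨by linarith [abs_nonneg x], by linarith⟩

lemma summable_t0 (x : ℝ) : Summable (fun k => t0 k x) := by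
  refine Summable.of_norm (Summable.of_nonneg_of_le (fun k => norm_nonneg _)
    (fun k => norm_t0_le (M_spec x).1 (M_spec x).2 k) (summable_u _))

lemma summable_t1 (x : ℝ) : Summable (fun k => t1 k x) := by
  refine Summable.of_norm (Summable.of_nonneg_of_le (fun k => norm_nonneg _)
    (fun k => norm_t1_le (M_spec x).1 (M_spec x).2 k) (summable_u _))

lemma summable_t2 (x : ℝ) : Summable (fun k => t2 k x) := by
  refine Summable.of_norm (Summable.of_nonneg_of_le (fun k => norm_nonneg _)
    (fun k => norm_t2_le (M_spec x).1 (M_spec x).2 k) (summable_u _))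

lemma hasDerivAt_t0 (k : ℕ) (x : ℝ) : HasDerivAt (fun y => t0 k y) (t1 k x) x := by
  have h1 : HasDerivAt (fun y : ℝ => y / 2) (1 / 2) x := (hasDerivAt_id x).div_const 2
  have h : HasDerivAt (fun y : ℝ => (y / 2) ^ (2 * k))
      ((((2 * k : ℕ) : ℝ) * (x / 2) ^ (2 * k - 1)) * (1 / 2)) x :=
    (hasDerivAt_pow (2 * k) (x / 2)).comp x h1
  have h2 := h.div_const ((k.factorial : ℝ) ^ 2)
  refine h2.congr_deriv ?_
  unfold t1
  ring

lemma hasDerivAt_t1 (k : ℕ) (x : ℝ) : HasDerivAt (fun y => t1 k y) (t2 k x) x := by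
  have h1 : HasDerivAt (fun y : ℝ => y / 2) (1 / 2) x := (hasDerivAt_id x).div_const 2
  have h : HasDerivAt (fun y : ℝ => (y / 2) ^ (2 * k - 1))
      ((((2 * k - 1 : ℕ) : ℝ) * (x / 2) ^ (2 * k - 1 - 1)) * (1 / 2)) x :=
    (hasDerivAt_pow (2 * k - 1) (x / 2)).comp x h1
  have h2 := (h.const_mul ((2 * k : ℕ) : ℝ)).div_const (2 * (k.factorial : ℝ) ^ 2)
  refine h2.congr_deriv ?_
  have e : 2 * k - 1 - 1 = 2 * k - 2 := by omega
  unfold t2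
  rw [e]
  ring

lemma hasDerivAt_besselI0 (x : ℝ) : HasDerivAt besselI0 (bI1 x) x := by
  set M := |x| + 2 with hM
  have hM2 : (2:ℝ) ≤ M := by rw [hM]; linarith [abs_nonneg x]
  have hball : x ∈ Metric.ball (0:ℝ) M := by
    simp only [Metric.mem_ball, Real.dist_eq, sub_zero]
    linarith [abs_nonneg x]
  have := hasDerivAt_tsum_of_isPreconnected (summable_u M) Metric.isOpen_ball
    (convex_ball (0:ℝ) M).isPreconnected
    (fun k y _ => hasDerivAt_t0 k y)
    (fun k y hy => by
      refine norm_t1_le hM2 ?_ k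
      simp only [Metric.mem_ball, Real.dist_eq, sub_zero] at hy
      linarith [le_of_lt hy])
    hball (summable_t0 x) hball
  exact this

lemma hasDerivAt_bI1 (x : ℝ) : HasDerivAt bI1 (bI2 x) x := by
  set M := |x| + 2 with hM
  have hM2 : (2:ℝ) ≤ M := by rw [hM]; linarith [abs_nonneg x]
  have hball : x ∈ Metric.ball (0:ℝ) M := by
    simp only [Metric.mem_ball, Real.dist_eq, sub_zero]
    linarith [abs_nonneg x]
  have := hasDerivAt_tsum_of_isPreconnected (summable_u M) Metric.isOpen_ball
    (convex_ball (0:ℝ) M).isPreconnected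
    (fun k y _ => hasDerivAt_t1 k y)
    (fun k y hy => by
      refine norm_t2_le hM2 ?_ k
      simp only [Metric.mem_ball, Real.dist_eq, sub_zero] at hy
      linarith [le_of_lt hy])
    hball (summable_t1 x) hball
  exact this

lemma deriv_besselI0 : deriv besselI0 = bI1 :=
  funext fun x => (hasDerivAt_besselI0 x).deriv

lemma deriv2_besselI0 : deriv (deriv besselI0) = bI2 := by
  rw [deriv_besselI0]
  exact funext fun x => (hasDerivAt_bI1 x).deriv

lemma term_ode (x : ℝ) (hx : x ≠ 0) (j : ℕ) :
    t2 (j + 1) x + (1 / x) * t1 (j + 1) x = t0 j x := by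
  unfold t0 t1 t2
  have e1 : 2 * (j + 1) - 2 = 2 * j := by omega
  have e2 : 2 * (j + 1) - 1 = 2 * j + 1 := by omega
  rw [e1, e2, pow_succ]
  have hf : ((j + 1).factorial : ℝ) = ((j:ℝ) + 1) * (j.factorial : ℝ) := by
    rw [Nat.factorial_succ]; push_cast; ring
  rw [hf]
  push_cast
  have hj1 : ((j:ℝ) + 1) ≠ 0 := by positivity
  have hfj : (j.factorial : ℝ) ≠ 0 := (fact_pos j).ne'
  field_simp
  ring

lemma besselI0_ode (x : ℝ) (hx : x ≠ 0) :
    bI2 x + (1 / x) * bI1 x = besselI0 x := by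
  have h1 := summable_t1 x
  have h2 := summable_t2 x
  have hsum : bI2 x + (1 / x) * bI1 x = ∑' k, (t2 k x + (1 / x) * t1 k x) := by
    rw [Summable.tsum_add h2 (h1.mul_left (1 / x)), tsum_mul_left]
    rfl
  have hg : Summable (fun k => t2 k x + (1 / x) * t1 k x) := h2.add (h1.mul_left _)
  rw [hsum, Summable.tsum_eq_zero_add hg]
  have h0 : t2 0 x + (1 / x) * t1 0 x = 0 := by
    unfold t1 t2; norm_num
  rw [h0, zero_add, besselI0_eq]
  exact tsum_congr fun j => term_ode x hx j

end BesselAux2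


set_option maxHeartbeats 1000000 in
open BesselAux BesselAux2 in
theorem poiseuille_weak_adherence_solution
    (β μ R ℓ₂ ℓ₃ ℓ₄ ℓ₁ : ℝ) (hμ : 0 < μ) (hR : 0 < R)
    (h₂ : 0 ≤ ℓ₂) (h₃ : 0 ≤ ℓ₃) (h₄ : 0 ≤ ℓ₄)
    (hne : ¬(ℓ₂ = 0 ∧ ℓ₃ = 0 ∧ ℓ₄ = 0))
    (hℓ₁ : ℓ₁ = Real.sqrt (3 / 4 * ℓ₂ ^ 2 + 1 / 2 * ℓ₃ ^ 2 + 2 * ℓ₄ ^ 2))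
    (Den : ℝ)
    (hDen : Den = ℓ₁ ^ 2 * R * deriv (deriv besselI0) (R / ℓ₁)
      - ℓ₁ * (1 / 4 * ℓ₂ ^ 2 + 1 / 2 * ℓ₃ ^ 2 - 2 * ℓ₄ ^ 2) * deriv besselI0 (R / ℓ₁))
    (hDen0 : Den ≠ 0)
    (v : ℝ → ℝ)
    (hv : ∀ r, v r = β / (4 * μ) * (R ^ 2 - r ^ 2)
      + R * β * (ℓ₁ ^ 2 - 1 / 4 * ℓ₂ ^ 2 - 1 / 2 * ℓ₃ ^ 2 + 2 * ℓ₄ ^ 2) * ℓ₁ ^ 2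
          * (besselI0 (r / ℓ₁) - besselI0 (R / ℓ₁)) / (2 * μ * Den)) :
    (∀ r ∈ Set.Ioo (0:ℝ) R,
      cylOpL (fun s => v s - ℓ₁ ^ 2 * cylOpL v s) r = -(β / μ)) ∧
    v R = 0 ∧
    μ * ℓ₁ ^ 2 * deriv (deriv v) R
      - μ * (1 / 4 * ℓ₂ ^ 2 + 1 / 2 * ℓ₃ ^ 2 - 2 * ℓ₄ ^ 2) * (1 / R) * deriv v R
      = 0 := by
  -- positivity of ℓ₁
  have hS : 0 < 3 / 4 * ℓ₂ ^ 2 + 1 / 2 * ℓ₃ ^ 2 + 2 * ℓ₄ ^ 2 := by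
    rcases lt_or_eq_of_le h₂ with h | h
    · nlinarith
    rcases lt_or_eq_of_le h₃ with h' | h'
    · nlinarith
    rcases lt_or_eq_of_le h₄ with h'' | h''
    · nlinarith
    exact absurd ⟨h.symm, h'.symm, h''.symm⟩ hne
  have hℓ : 0 < ℓ₁ := hℓ₁ ▸ Real.sqrt_pos.mpr hS
  have hℓne : ℓ₁ ≠ 0 := hℓ.ne'
  obtain ⟨A, hA⟩ : ∃ a : ℝ, a = β / (4 * μ) := ⟨_, rfl⟩
  obtain ⟨K, hK⟩ : ∃ a : ℝ, a = besselI0 (R / ℓ₁) := ⟨_, rfl⟩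
  obtain ⟨Cc, hCc⟩ : ∃ a : ℝ, a = R * β * (ℓ₁ ^ 2 - 1 / 4 * ℓ₂ ^ 2 - 1 / 2 * ℓ₃ ^ 2 + 2 * ℓ₄ ^ 2)
      * ℓ₁ ^ 2 / (2 * μ * Den) := ⟨_, rfl⟩
  have hvf : v = fun r => A * (R ^ 2 - r ^ 2) + Cc * (besselI0 (r / ℓ₁) - K) := by
    funext r
    rw [hv r, hCc, hA, hK]
    ring
  -- derivatives of v
  have hcomp0 : ∀ r : ℝ, HasDerivAt (fun s => besselI0 (s / ℓ₁)) (bI1 (r / ℓ₁) * (1 / ℓ₁)) r := by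
    intro r
    exact (hasDerivAt_besselI0 (r / ℓ₁)).comp r ((hasDerivAt_id r).div_const ℓ₁)
  have hcomp1 : ∀ r : ℝ, HasDerivAt (fun s => bI1 (s / ℓ₁)) (bI2 (r / ℓ₁) * (1 / ℓ₁)) r := by
    intro r
    exact (hasDerivAt_bI1 (r / ℓ₁)).comp r ((hasDerivAt_id r).div_const ℓ₁)
  have hd1 : ∀ r : ℝ, HasDerivAt v (-(2 * A * r) + Cc / ℓ₁ * bI1 (r / ℓ₁)) r := by
    intro r
    rw [hvf]
    have h1 : HasDerivAt (fun s : ℝ => A * (R ^ 2 - s ^ 2)) (A * -(2 * r)) r := by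
      have := ((hasDerivAt_pow 2 r).const_sub (R ^ 2)).const_mul A
      refine this.congr_deriv ?_
      push_cast; ring
    have h2 : HasDerivAt (fun s : ℝ => Cc * (besselI0 (s / ℓ₁) - K))
        (Cc * (bI1 (r / ℓ₁) * (1 / ℓ₁))) r := ((hcomp0 r).sub_const K).const_mul Cc
    refine (h1.add h2).congr_deriv ?_
    ring
  have hder1 : deriv v = fun r => -(2 * A * r) + Cc / ℓ₁ * bI1 (r / ℓ₁) :=
    funext fun r => (hd1 r).deriv
  have hd2 : ∀ r : ℝ, HasDerivAt (deriv v) (-(2 * A) + Cc / ℓ₁ ^ 2 * bI2 (r / ℓ₁)) r := by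
    intro r
    rw [hder1]
    have h1 : HasDerivAt (fun s : ℝ => -(2 * A * s)) (-(2 * A)) r := by
      have := ((hasDerivAt_id r).const_mul (2 * A)).neg
      refine this.congr_deriv ?_
      ring
    have h2 : HasDerivAt (fun s : ℝ => Cc / ℓ₁ * bI1 (s / ℓ₁))
        (Cc / ℓ₁ * (bI2 (r / ℓ₁) * (1 / ℓ₁))) r := (hcomp1 r).const_mul (Cc / ℓ₁)
    refine (h1.add h2).congr_deriv ?_
    ring
  have hder2 : deriv (deriv v) = fun r => -(2 * A) + Cc / ℓ₁ ^ 2 * bI2 (r / ℓ₁) :=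
    funext fun r => (hd2 r).deriv
  -- the key computation of 𝓛 v
  have hLv : ∀ r : ℝ, r ≠ 0 →
      cylOpL v r = -(β / μ) + Cc / ℓ₁ ^ 2 * besselI0 (r / ℓ₁) := by
    intro r hr
    have hs : r / ℓ₁ ≠ 0 := div_ne_zero hr hℓne
    have hode := besselI0_ode (r / ℓ₁) hs
    rw [one_div_div] at hode
    unfold cylOpL
    rw [(hd2 r).deriv, (hd1 r).deriv, ← hode, hA]
    field_simp
    ring
  refine ⟨?_, ?_, ?_⟩
  · -- PDE on (0, R)
    intro r hr
    have hq : ∀ s : ℝ, s ∈ Set.Ioi (0:ℝ) →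
        (fun s => v s - ℓ₁ ^ 2 * cylOpL v s) s
          = A * (R ^ 2 - s ^ 2) + (4 * A * ℓ₁ ^ 2 - Cc * K) := by
      intro s hs
      simp only
      rw [hLv s (ne_of_gt hs)]
      simp only [hvf]
      rw [hA]
      field_simp
      ring
    set q : ℝ → ℝ := fun s => A * (R ^ 2 - s ^ 2) + (4 * A * ℓ₁ ^ 2 - Cc * K) with hqdef
    have hEq : (fun s => v s - ℓ₁ ^ 2 * cylOpL v s) =ᶠ[nhds r] q := by
      filter_upwards [isOpen_Ioi.mem_nhds hr.1] with s hs
      exact hq s hs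
    have hq1 : ∀ s : ℝ, HasDerivAt q (-(2 * A * s)) s := by
      intro s
      rw [hqdef]
      have h1 : HasDerivAt (fun t : ℝ => A * (R ^ 2 - t ^ 2)) (A * -(2 * s)) s := by
        have := ((hasDerivAt_pow 2 s).const_sub (R ^ 2)).const_mul A
        refine this.congr_deriv ?_
        push_cast; ring
      have := h1.add_const (4 * A * ℓ₁ ^ 2 - Cc * K)
      refine this.congr_deriv ?_
      ring
    have hqd1 : deriv q = fun s => -(2 * A * s) := funext fun s => (hq1 s).deriv
    have hq2 : ∀ s : ℝ, HasDerivAt (deriv q) (-(2 * A)) s := by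
      intro s
      rw [hqd1]
      have := ((hasDerivAt_id s).const_mul (2 * A)).neg
      refine this.congr_deriv ?_
      ring
    have cyl_congr : ∀ f g : ℝ → ℝ, f =ᶠ[nhds r] g → cylOpL f r = cylOpL g r := by
      intro f g h
      unfold cylOpL
      rw [h.deriv_eq, h.deriv.deriv_eq]
    rw [cyl_congr _ q hEq]
    unfold cylOpL
    rw [(hq2 r).deriv, (hq1 r).deriv, hA]
    have hr0 : r ≠ 0 := ne_of_gt hr.1
    field_simp
    ring
  · -- no-slip
    rw [hv R]
    ring
  · -- weak adherence
    rw [(hd2 R).deriv, (hd1 R).deriv]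
    rw [deriv2_besselI0, deriv_besselI0] at hDen
    obtain ⟨Y1, hY1⟩ : ∃ a : ℝ, a = bI1 (R / ℓ₁) := ⟨_, rfl⟩
    obtain ⟨Y2, hY2⟩ : ∃ a : ℝ, a = bI2 (R / ℓ₁) := ⟨_, rfl⟩
    rw [← hY1, ← hY2]
    rw [← hY1, ← hY2] at hDen
    have hCc2 : 2 * μ * Den * Cc
        = R * β * (ℓ₁ ^ 2 - 1 / 4 * ℓ₂ ^ 2 - 1 / 2 * ℓ₃ ^ 2 + 2 * ℓ₄ ^ 2) * ℓ₁ ^ 2 := by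
      rw [hCc]
      field_simp [hμ.ne', hDen0]
    have key : μ * ℓ₁ ^ 2 * (-(2 * A) + Cc / ℓ₁ ^ 2 * Y2)
        - μ * (1 / 4 * ℓ₂ ^ 2 + 1 / 2 * ℓ₃ ^ 2 - 2 * ℓ₄ ^ 2) * (1 / R)
          * (-(2 * A * R) + Cc / ℓ₁ * Y1)
        = (β * R * ℓ₁ ^ 2 * ((1 / 4 * ℓ₂ ^ 2 + 1 / 2 * ℓ₃ ^ 2 - 2 * ℓ₄ ^ 2) - ℓ₁ ^ 2)
            + 2 * μ * Cc * (ℓ₁ ^ 2 * R * Y2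
              - ℓ₁ * (1 / 4 * ℓ₂ ^ 2 + 1 / 2 * ℓ₃ ^ 2 - 2 * ℓ₄ ^ 2) * Y1))
          / (2 * R * ℓ₁ ^ 2) := by
      rw [hA]
      field_simp
      ring
    rw [key, div_eq_zero_iff]
    left
    linear_combination (-(2 * μ * Cc)) * hDen + hCc2
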